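/- Let n ≥ 1, a ≥ 1 be integers, let v = (v_1,...,v_d) be a tuple of nonzero integers, and let H_{k-1}(v) denote the alternating multiple harmonic sum. Then n·∑_{k=1}^{n} H_{k-1}(v)·C(n,k)/(k^a·C(n+k,k)) = ∑_{k=1}^{n} H_{k-1}(v)·C(n,k)/(k^{a-1}·C(n+k,k)) + 2·∑_{k=1}^{n} H_{k-1}(a, v)·k·C(n,k)/C(n+k,k), where (a, v) denotes the tuple with a prepended to v. -/

import Mathlib

/-!
Write `c k = C(n,k) / C(n+k,k)`. Then `(n+j+1) c (j+1) = (n-j) c j`, so `2 ∑_{j<k≤n} k c k`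
telescopes to `(n-j) c j`. Expanding `H_{k-1}(a,v) = ∑_{j<k} H_{j-1}(v) / j^a` and swapping the
order of summation turns the last sum of the identity into `∑_j H_{j-1}(v) (n-j) c j / j^a`, which
is the difference of the other two sums because `n / j^a - 1 / j^(a-1) = (n-j) / j^a`.
-/

open Finset

/-- Sign factor for an alternating multiple harmonic sum entry. -/
def aSgn (s : ℤ) : ℚ := if 0 < s then 1 else -1

/-- Alternating multiple harmonic sum `H_n(s₁,…,s_ℓ)` (strict indices). -/
def Hh : ℕ → List ℤ → ℚ
  | _, [] => 1
  | n, s :: r => ∑ k ∈ Finset.Icc 1 n, aSgn s ^ k / (k : ℚ) ^ s.natAbs * Hh (k - 1) r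

/-- Alternating multiple harmonic star sum `H*_n(s₁,…,s_ℓ)` (weak indices). -/
def Hstar : ℕ → List ℤ → ℚ
  | _, [] => 1
  | n, s :: r => ∑ k ∈ Finset.Icc 1 n, aSgn s ^ k / (k : ℚ) ^ s.natAbs * Hstar k r

/-- All compositions (ordered tuples of positive integers) of `w`. -/
def comps : ℕ → List (List ℕ)
  | 0 => [[]]
  | (w+1) => (List.range (w+1)).flatMap (fun j => (comps (w - j)).map (fun l => (j+1) :: l))
decreasing_by simp_wf <;> omega

/-- Coerce a list of naturals to a list of integers. -/
def natList (l : List ℕ) : List ℤ := l.map (fun m => (m : ℤ))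

def binomRatio (n k : ℕ) : ℚ := (n.choose k : ℚ) / ((n + k).choose k : ℚ)

lemma binomRatio_succ (n j : ℕ) :
    ((n : ℚ) + j + 1) * binomRatio n (j + 1) = ((n : ℚ) - j) * binomRatio n j := by
  have hnum : (n.choose (j + 1) : ℚ) = n.choose j * ((n : ℚ) - j) / (j + 1) := by
    rw [eq_div_iff (by positivity)]
    rcases le_or_gt j n with hjn | hnj
    · have := Nat.choose_succ_right_eq n j
      rw [← Nat.cast_sub hjn]
      exact_mod_cast this
    · simp [Nat.choose_eq_zero_of_lt hnj, Nat.choose_eq_zero_of_lt (Nat.lt_succ_of_lt hnj)]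
  have hden :
      ((n + (j + 1)).choose (j + 1) : ℚ) = ((n : ℚ) + j + 1) * (n + j).choose j / (j + 1) := by
    rw [eq_div_iff (by positivity), ← add_assoc]
    exact_mod_cast (Nat.add_one_mul_choose_eq (n + j) j).symm
  have hpos : ((n + j).choose j : ℚ) ≠ 0 := Nat.cast_ne_zero.2 (Nat.choose_pos (by omega)).ne'
  unfold binomRatio
  rw [hnum, hden]
  field_simp

lemma two_mul_sum_Ioc_mul_binomRatio (n j : ℕ) (hj : j ≤ n) :
    2 * ∑ k ∈ Ioc j n, (k : ℚ) * binomRatio n k = ((n : ℚ) - j) * binomRatio n j := by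
  induction hj using Nat.decreasingInduction with
  | self => simp
  | of_succ j hjn ih =>
    rw [← insert_Ioc_add_one_left_eq_Ioc hjn, sum_insert (by simp), mul_add, ih,
      ← binomRatio_succ n j]
    push_cast
    ring

lemma Hh_cons_natCast (a : ℕ) (ha : 0 < a) (m : ℕ) (v : List ℤ) :
    Hh m ((a : ℤ) :: v) = ∑ j ∈ Icc 1 m, Hh (j - 1) v / (j : ℚ) ^ a := by
  have hsgn : aSgn (a : ℤ) = 1 := if_pos (by exact_mod_cast ha)
  simp only [Hh, hsgn, one_pow, Int.natAbs_natCast, div_eq_inv_mul, mul_one]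

lemma sum_Hh_cons_natCast_mul (a : ℕ) (ha : 0 < a) (n : ℕ) (v : List ℤ) (f : ℕ → ℚ) :
    ∑ k ∈ Icc 1 n, Hh (k - 1) ((a : ℤ) :: v) * f k
      = ∑ j ∈ Icc 1 n, Hh (j - 1) v / (j : ℚ) ^ a * ∑ k ∈ Ioc j n, f k := by
  simp only [Hh_cons_natCast a ha, sum_mul, mul_sum]
  exact sum_comm' fun k j => by simp only [mem_Icc, mem_Ioc]; omega

theorem stmt7_general (n a : ℕ) (ha : 1 ≤ a) (v : List ℤ) :
    (n : ℚ) * ∑ k ∈ Finset.Icc 1 n,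
        Hh (k-1) v * (n.choose k) / ((k : ℚ) ^ a * ((n+k).choose k))
      = ∑ k ∈ Finset.Icc 1 n,
          Hh (k-1) v * (n.choose k) / ((k : ℚ) ^ (a-1) * ((n+k).choose k))
        + 2 * ∑ k ∈ Finset.Icc 1 n,
            Hh (k-1) ((a : ℤ) :: v) * (k : ℚ) * (n.choose k) / ((n+k).choose k) := by
  have hsplit : ∀ k ∈ Icc 1 n,
      (n : ℚ) * (Hh (k-1) v * (n.choose k) / ((k : ℚ) ^ a * ((n+k).choose k)))
      = Hh (k-1) v * (n.choose k) / ((k : ℚ) ^ (a-1) * ((n+k).choose k))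
        + Hh (k - 1) v / (k : ℚ) ^ a * (((n : ℚ) - k) * binomRatio n k) := by
    intro k hk
    have hk0 : (k : ℚ) ≠ 0 := by have := (mem_Icc.1 hk).1; positivity
    rw [binomRatio, ← Nat.sub_add_cancel ha, pow_succ, Nat.add_sub_cancel]
    field_simp
    ring
  have hcons : 2 * ∑ k ∈ Icc 1 n,
        Hh (k-1) ((a : ℤ) :: v) * (k : ℚ) * (n.choose k) / ((n+k).choose k)
      = ∑ j ∈ Icc 1 n, Hh (j - 1) v / (j : ℚ) ^ a * (((n : ℚ) - j) * binomRatio n j) := by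
    have hterm : ∀ k : ℕ,
        Hh (k-1) ((a : ℤ) :: v) * (k : ℚ) * (n.choose k) / ((n+k).choose k)
          = Hh (k-1) ((a : ℤ) :: v) * ((k : ℚ) * binomRatio n k) := fun k => by
      rw [binomRatio]; ring
    rw [sum_congr rfl fun k _ => hterm k, sum_Hh_cons_natCast_mul a ha, mul_sum]
    refine sum_congr rfl fun j hj => ?_
    rw [← two_mul_sum_Ioc_mul_binomRatio n j (mem_Icc.1 hj).2]
    ring
  rw [mul_sum, sum_congr rfl hsplit, sum_add_distrib, hcons]

theorem stmt7 (n a : ℕ) (hn : 1 ≤ n) (ha : 1 ≤ a) (v : List ℤ) (hv : ∀ s ∈ v, s ≠ 0) :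
    (n : ℚ) * ∑ k ∈ Finset.Icc 1 n,
        Hh (k-1) v * (n.choose k) / ((k : ℚ) ^ a * ((n+k).choose k))
      = ∑ k ∈ Finset.Icc 1 n,
          Hh (k-1) v * (n.choose k) / ((k : ℚ) ^ (a-1) * ((n+k).choose k))
        + 2 * ∑ k ∈ Finset.Icc 1 n,
            Hh (k-1) ((a : ℤ) :: v) * (k : ℚ) * (n.choose k) / ((n+k).choose k) :=
  stmt7_general n a ha v
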